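/- Let K ≥ 4 and let f = [z1,z2,z3,z4] be a simple K-round quadrilateral in ℂ. Then each of the two diagonals of f has length at least diam(f)/(4K²). -/

import Mathlib

open Complex Set MeasureTheory Filter
open scoped Classical ENNReal

noncomputable section

/-- A quadrilateral face `[z1 z2 z3 z4]` given by its four vertices in `ℂ`. -/
structure Quad where
  z1 : ℂ
  z2 : ℂ
  z3 : ℂ
  z4 : ℂ

namespace Quad

/-- The set of the four vertices of the face. -/
def vertexSet (q : Quad) : Set ℂ := {q.z1, q.z2, q.z3, q.z4}

/-- The four edges of the face, as segments. -/
def edges (q : Quad) : Set (Set ℂ) :=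
  {segment ℝ q.z1 q.z2, segment ℝ q.z2 q.z3, segment ℝ q.z3 q.z4, segment ℝ q.z4 q.z1}

/-- The four vertices are pairwise distinct. -/
def Distinct (q : Quad) : Prop :=
  q.z1 ≠ q.z2 ∧ q.z1 ≠ q.z3 ∧ q.z1 ≠ q.z4 ∧ q.z2 ≠ q.z3 ∧ q.z2 ≠ q.z4 ∧ q.z3 ≠ q.z4

/-- The face is simple: vertices pairwise distinct, and two edges meet only when
consecutive, and then only at their shared endpoint. -/
def Simple (q : Quad) : Prop :=
  q.Distinct ∧
  segment ℝ q.z1 q.z2 ∩ segment ℝ q.z2 q.z3 = {q.z2} ∧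
  segment ℝ q.z2 q.z3 ∩ segment ℝ q.z3 q.z4 = {q.z3} ∧
  segment ℝ q.z3 q.z4 ∩ segment ℝ q.z4 q.z1 = {q.z4} ∧
  segment ℝ q.z4 q.z1 ∩ segment ℝ q.z1 q.z2 = {q.z1} ∧
  segment ℝ q.z1 q.z2 ∩ segment ℝ q.z3 q.z4 = ∅ ∧
  segment ℝ q.z2 q.z3 ∩ segment ℝ q.z4 q.z1 = ∅

/-- The maximal distance between two of the four vertices. -/
def diam (q : Quad) : ℝ := Metric.diam q.vertexSet

/-- The lengths of the four edges. -/
def edgeLen (q : Quad) : Fin 4 → ℝ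
  | 0 => dist q.z1 q.z2
  | 1 => dist q.z2 q.z3
  | 2 => dist q.z3 q.z4
  | 3 => dist q.z4 q.z1

/-- `K`-roundness: all four unsigned vertex angles are at least `2π/K`, and the ratio of
the lengths of any two edges is at most `K`. -/
def KRound (q : Quad) (K : ℝ) : Prop :=
  2 * Real.pi / K ≤ EuclideanGeometry.angle q.z4 q.z1 q.z2 ∧
  2 * Real.pi / K ≤ EuclideanGeometry.angle q.z1 q.z2 q.z3 ∧
  2 * Real.pi / K ≤ EuclideanGeometry.angle q.z2 q.z3 q.z4 ∧
  2 * Real.pi / K ≤ EuclideanGeometry.angle q.z3 q.z4 q.z1 ∧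
  ∀ i j : Fin 4, q.edgeLen i ≤ K * q.edgeLen j

/-- The diagonals of the face are orthogonal. -/
def Orthogonal (q : Quad) : Prop :=
  ((starRingEnd ℂ) (q.z3 - q.z1) * (q.z4 - q.z2)).re = 0

/-- The diagonal `[z1,z3]` is interior: its open segment is disjoint from the four edges. -/
def DiagInterior13 (q : Quad) : Prop :=
  ∀ e ∈ q.edges, openSegment ℝ q.z1 q.z3 ∩ e = ∅

/-- The region of the face: the union of the two triangles obtained by cutting along an
interior diagonal. -/
def region (q : Quad) : Set ℂ :=
  if q.DiagInterior13 then
    convexHull ℝ {q.z1, q.z2, q.z3} ∪ convexHull ℝ {q.z1, q.z3, q.z4}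
  else
    convexHull ℝ {q.z2, q.z3, q.z4} ∪ convexHull ℝ {q.z2, q.z4, q.z1}

/-- The area of the face: the Lebesgue measure of its region. -/
def area (q : Quad) : ℝ := (volume q.region).toReal

/-- `v` is the discrete gradient of `u` on the (orthogonal) face `q`:
`v ⊙ (z3 − z1) = u z3 − u z1` and `v ⊙ (z4 − z2) = u z4 − u z2`. -/
def IsDiscreteGrad (q : Quad) (u : ℂ → ℝ) (v : ℂ) : Prop :=
  ((starRingEnd ℂ) v * (q.z3 - q.z1)).re = u q.z3 - u q.z1 ∧
  ((starRingEnd ℂ) v * (q.z4 - q.z2)).re = u q.z4 - u q.z2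

/-- The contribution of the face `q` to the discrete Laplacian of `u` at a vertex `ζ`
(after cyclic relabeling so that the first vertex is `ζ`). -/
def lapTerm (q : Quad) (u : ℂ → ℝ) (ζ : ℂ) : ℝ :=
  if ζ = q.z1 then dist q.z2 q.z4 / dist q.z1 q.z3 * (u q.z3 - u q.z1)
  else if ζ = q.z2 then dist q.z1 q.z3 / dist q.z2 q.z4 * (u q.z4 - u q.z2)
  else if ζ = q.z3 then dist q.z2 q.z4 / dist q.z1 q.z3 * (u q.z1 - u q.z3)
  else if ζ = q.z4 then dist q.z1 q.z3 / dist q.z2 q.z4 * (u q.z2 - u q.z4)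
  else 0

end Quad

/-- A quadrilateral lattice: a finite nonempty collection of simple quadrilateral faces with
pairwise disjoint interiors, intersecting only in common vertices or common edges, each edge
on at most two faces, whose union is connected and simply connected. -/
structure QuadLattice where
  faces : Finset Quad
  faces_nonempty : faces.Nonempty
  faces_simple : ∀ f ∈ faces, f.Simple
  interiors_disjoint : ∀ f ∈ faces, ∀ g ∈ faces, f ≠ g →
    interior f.region ∩ interior g.region = ∅
  region_inter : ∀ f ∈ faces, ∀ g ∈ faces, f ≠ g →
    f.region ∩ g.region = ∅ ∨
    (∃ v, v ∈ f.vertexSet ∧ v ∈ g.vertexSet ∧ f.region ∩ g.region = {v}) ∨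
    (∃ e, e ∈ f.edges ∧ e ∈ g.edges ∧ f.region ∩ g.region = e)
  edge_le_two_faces : ∀ f ∈ faces, ∀ e ∈ f.edges,
    ({g : Quad | g ∈ faces ∧ e ∈ g.edges}).ncard ≤ 2
  support_connected : IsConnected (⋃ f ∈ faces, f.region)
  support_simplyConnected : SimplyConnectedSpace (⋃ f ∈ faces, f.region)

namespace QuadLattice

/-- The union of the regions of all faces. -/
def support (Q : QuadLattice) : Set ℂ := ⋃ f ∈ Q.faces, f.region

/-- The set `Q*` of all vertices of the lattice. -/
def verts (Q : QuadLattice) : Set ℂ := ⋃ f ∈ Q.faces, f.vertexSet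

/-- The boundary `∂Q`: the union of all edges belonging to exactly one face. -/
def boundary (Q : QuadLattice) : Set ℂ :=
  ⋃₀ {e | (∃ f ∈ Q.faces, e ∈ f.edges) ∧
      ({g : Quad | g ∈ Q.faces ∧ e ∈ g.edges}).ncard = 1}

/-- `M(Q)`: the maximal edge length of the lattice. -/
def M (Q : QuadLattice) : ℝ :=
  sSup {r : ℝ | ∃ f ∈ Q.faces, ∃ i : Fin 4, r = f.edgeLen i}

/-- All faces of the lattice are `K`-round. -/
def KRound (Q : QuadLattice) (K : ℝ) : Prop := ∀ f ∈ Q.faces, f.KRound K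

/-- All faces of the lattice have orthogonal diagonals. -/
def Orthogonal (Q : QuadLattice) : Prop := ∀ f ∈ Q.faces, f.Orthogonal

/-- `black` is a black/white two-coloring of the vertices: in every face the two diagonal
pairs receive opposite colors. -/
def IsColoring (Q : QuadLattice) (black : ℂ → Prop) : Prop :=
  ∀ f ∈ Q.faces, (black f.z1 ↔ black f.z3) ∧ (black f.z2 ↔ black f.z4) ∧
    (black f.z1 ↔ ¬ black f.z2)

/-- The discrete Laplacian of `u` at the point `ζ`. -/
def lap (Q : QuadLattice) (u : ℂ → ℝ) (ζ : ℂ) : ℝ :=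
  ∑ f ∈ Q.faces, f.lapTerm u ζ

/-- `u` is discrete harmonic: its discrete Laplacian vanishes at every interior vertex. -/
def DiscreteHarmonic (Q : QuadLattice) (u : ℂ → ℝ) : Prop :=
  ∀ ζ ∈ Q.verts, ζ ∉ Q.boundary → Q.lap u ζ = 0

/-- The maximum of `|u z' − u w'|` over pairs of vertices of `Q` lying on `∂Q` within
distance `r` of `c` (zero if there are no such vertices). -/
def bdryOsc (Q : QuadLattice) (u : ℂ → ℝ) (c : ℂ) (r : ℝ) : ℝ :=
  sSup (insert 0 {d : ℝ | ∃ z' ∈ Q.verts ∩ Q.boundary, ∃ w' ∈ Q.verts ∩ Q.boundary,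
    dist z' c ≤ r ∧ dist w' c ≤ r ∧ d = |u z' - u w'|})

end QuadLattice

/-- A sequence of quadrilateral lattices approximates a bounded domain `Ω` if the maximal
edge lengths tend to `0` and the Hausdorff distance between `∂Qₙ` and `∂Ω` tends to `0`. -/
def Approximates (Q : ℕ → QuadLattice) (Ω : Set ℂ) : Prop :=
  Tendsto (fun n => (Q n).M) atTop (nhds 0) ∧
  Tendsto (fun n => Metric.hausdorffDist ((Q n).boundary) (frontier Ω)) atTop (nhds 0)

/-- The signed (shoelace) area of the quadrilateral `abcd`. -/
def signedArea (a b c d : ℂ) : ℝ :=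
  (1 / 2) * ((starRingEnd ℂ) a * b + (starRingEnd ℂ) b * c +
    (starRingEnd ℂ) c * d + (starRingEnd ℂ) d * a).im

/-- The continuous Laplacian `Δg = D²g(1,1) + D²g(i,i)` of `g : ℂ → ℝ`. -/
def lapCont (g : ℂ → ℝ) (z : ℂ) : ℝ :=
  iteratedFDeriv ℝ 2 g z ![1, 1] + iteratedFDeriv ℝ 2 g z ![Complex.I, Complex.I]

/-- The closed axis-parallel square `[a, a+r] × [b, b+r]` in `ℂ`. -/
def sqSet (a b r : ℝ) : Set ℂ :=
  {z : ℂ | z.re ∈ Set.Icc a (a + r) ∧ z.im ∈ Set.Icc b (b + r)}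

end

/-!
The angle of the quadrilateral at `z₂` is at least `2π/K`, so the law of cosines gives
`|z₁ - z₃| ≥ (2/K) |z₁ - z₂|`. The edge-ratio bound makes every edge at most `K |z₁ - z₂|`,
hence every distance between vertices at most `2K |z₁ - z₂|`. Together,
`|z₁ - z₃| ≥ diam/K²`; the other diagonal is handled in the same way at `z₃`.
-/

lemma Real.cos_le_one_sub_eight_div_sq {K θ : ℝ} (hK : 0 < K) (hθ : 2 * Real.pi / K ≤ θ)
    (hθπ : θ ≤ Real.pi) : Real.cos θ ≤ 1 - 8 / K ^ 2 := by
  have hθ₀ : 0 ≤ 2 * Real.pi / K := by positivity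
  calc Real.cos θ ≤ 1 - 2 / Real.pi ^ 2 * θ ^ 2 :=
        Real.cos_le_one_sub_mul_cos_sq (abs_le.2 ⟨by linarith [Real.pi_pos], hθπ⟩)
    _ ≤ 1 - 2 / Real.pi ^ 2 * (2 * Real.pi / K) ^ 2 := by gcongr
    _ = 1 - 8 / K ^ 2 := by field_simp; ring

open EuclideanGeometry in
lemma EuclideanGeometry.two_div_mul_dist_le_dist_of_two_pi_div_le_angle {V P : Type*}
    [NormedAddCommGroup V] [InnerProductSpace ℝ V] [MetricSpace P] [NormedAddTorsor V P]
    {K : ℝ} (hK : 4 ≤ K) {a b c : P} (h : 2 * Real.pi / K ≤ ∠ a b c) :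
    2 / K * dist a b ≤ dist a c := by
  have hK₀ : 0 < K := by linarith
  have hcos := Real.cos_le_one_sub_eight_div_sq hK₀ h (angle_le_pi a b c)
  have hlaw := law_cos a b c
  set x := dist a b
  set y := dist c b
  have hx : 0 ≤ x := dist_nonneg
  have hy : 0 ≤ y := dist_nonneg
  have hsq : (x - y) ^ 2 + 16 * x * y / K ^ 2 ≤ dist a c ^ 2 := by
    have hexp : (x - y) ^ 2 + 16 * x * y / K ^ 2 = x * x + y * y - 2 * x * y * (1 - 8 / K ^ 2) := by
      ring
    rw [hexp, sq (dist a c), hlaw]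
    linarith [mul_le_mul_of_nonneg_left hcos (by positivity : 0 ≤ 2 * x * y)]
  -- As `K² ≥ 16`:
  -- `K² (x - y)² + 16 x y - 4 x² ≥ 16 (x - y)² + 16 x y - 4 x² = 4 ((x - 2y)² + 2x²)`.
  have hmain : (2 / K * x) ^ 2 ≤ (x - y) ^ 2 + 16 * x * y / K ^ 2 := by
    rw [div_mul_eq_mul_div, div_pow, ← sub_nonneg]
    have hcommon : (x - y) ^ 2 + 16 * x * y / K ^ 2 - (2 * x) ^ 2 / K ^ 2
        = (K ^ 2 * (x - y) ^ 2 + 16 * x * y - 4 * x ^ 2) / K ^ 2 := by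
      field_simp; ring
    rw [hcommon]
    apply div_nonneg _ (by positivity)
    have hK16 : 16 ≤ K ^ 2 := by nlinarith
    nlinarith [mul_le_mul_of_nonneg_right hK16 (sq_nonneg (x - y)), sq_nonneg (x - 2 * y)]
  exact le_of_pow_le_pow_left₀ two_ne_zero dist_nonneg (hmain.trans hsq)

namespace Quad

lemma diam_le_two_mul (q : Quad) {L : ℝ} (h : ∀ i, q.edgeLen i ≤ L) : q.diam ≤ 2 * L := by
  have h₀ : dist q.z1 q.z2 ≤ L := h 0
  have h₁ : dist q.z2 q.z3 ≤ L := h 1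
  have h₂ : dist q.z3 q.z4 ≤ L := h 2
  have h₃ : dist q.z4 q.z1 ≤ L := h 3
  have hL : 0 ≤ L := dist_nonneg.trans h₀
  have h₁₃ : dist q.z1 q.z3 ≤ 2 * L := (dist_triangle _ q.z2 _).trans (by linarith)
  have h₂₄ : dist q.z2 q.z4 ≤ 2 * L := (dist_triangle _ q.z3 _).trans (by linarith)
  refine Metric.diam_le_of_forall_dist_le (by positivity) ?_
  simp only [vertexSet, Set.mem_insert_iff, Set.mem_singleton_iff]
  rintro x (rfl | rfl | rfl | rfl) y (rfl | rfl | rfl | rfl) <;>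
    linarith [dist_comm q.z1 q.z2, dist_comm q.z2 q.z3, dist_comm q.z3 q.z4,
      dist_comm q.z4 q.z1, dist_comm q.z1 q.z3, dist_comm q.z2 q.z4, dist_self q.z1,
      dist_self q.z2, dist_self q.z3, dist_self q.z4]

end Quad

theorem diagonal_length_lower_bound_general (K : ℝ) (hK : 4 ≤ K) (q : Quad)
    (hr : q.KRound K) :
    q.diam / (4 * K ^ 2) ≤ dist q.z1 q.z3 ∧ q.diam / (4 * K ^ 2) ≤ dist q.z2 q.z4 := by
  obtain ⟨-, h₂, h₃, -, hratio⟩ := hr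
  have hK₀ : 0 < K := by linarith
  have key : ∀ d e : ℝ, 0 ≤ e → 2 / K * e ≤ d → q.diam ≤ 2 * (K * e) →
      q.diam / (4 * K ^ 2) ≤ d := by
    intro d e he hd hdiam
    calc q.diam / (4 * K ^ 2) ≤ 2 * (K * e) / (4 * K ^ 2) := by gcongr
      _ ≤ 2 / K * e := by
        rw [div_le_iff₀ (by positivity)]
        field_simp
        nlinarith
      _ ≤ d := hd
  exact ⟨key _ _ dist_nonneg
      (EuclideanGeometry.two_div_mul_dist_le_dist_of_two_pi_div_le_angle hK h₂)
      (q.diam_le_two_mul fun i => hratio i 0),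
    key _ _ dist_nonneg
      (EuclideanGeometry.two_div_mul_dist_le_dist_of_two_pi_div_le_angle hK h₃)
      (q.diam_le_two_mul fun i => hratio i 1)⟩

/-- Each diagonal of a simple `K`-round quadrilateral has length at least
`diam(f)/(4K²)`. -/
theorem diagonal_length_lower_bound (K : ℝ) (hK : 4 ≤ K) (q : Quad)
    (hs : q.Simple) (hr : q.KRound K) :
    q.diam / (4 * K ^ 2) ≤ dist q.z1 q.z3 ∧ q.diam / (4 * K ^ 2) ≤ dist q.z2 q.z4 :=
  diagonal_length_lower_bound_general K hK q hr
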